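/- Let R ∈ ℤ^m and S ∈ ℤ^n be nonnegative integer vectors with equal component sums. There exists an m×n nonnegative integer matrix A with row sum vector R and column sum vector S satisfying r_∞ A = A (i.e. a_{i,j} = a_{i, n+1−j} for all i,j) if and only if (a) S is palindromic, and (b) if n is even then every component of R is even, and if n is odd then s_⌈n/2⌉ ≥ o(R), where o(R) is the number of odd components of R. -/

import Mathlib

/-!
Split the columns into the orbits `{j, σ j}` of the involution. A `σ`-invariant row sums to twice
its sum over one column of each pair plus its sum over the fixed columns, so every odd row needs a
positive entry in a fixed column, whence `o(R) ≤ ∑_{σ j = j} S j`. Conversely, pick `t ≤ R` with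
`t ≡ R (mod 2)` and total `∑_{σ j = j} S j`, transport `t` into the fixed columns and `(R - t) / 2`
into one column of each pair, and mirror. For `Fin.rev` the only fixed column is the middle one,
present exactly when `n` is odd.
-/

open Finset Function

section Transport

variable {ι κ : Type*} [Fintype ι] [Fintype κ]

theorem exists_le_sum_eq_of_le_sum (S : κ → ℕ) {c : ℕ} (hc : c ≤ ∑ j, S j) :
    ∃ T ≤ S, ∑ j, T j = c := by
  classical
  induction c with
  | zero => exact ⟨0, fun j => Nat.zero_le _, by simp⟩
  | succ c ih =>
    obtain ⟨T, hTS, hT⟩ := ih (by omega)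
    obtain ⟨j, -, hj⟩ := exists_lt_of_sum_lt (s := univ) (f := T) (g := S) (by omega)
    refine ⟨T + Pi.single j 1, fun k => ?_, by simp [sum_add_distrib, hT]⟩
    rcases eq_or_ne k j with rfl | hk
    · simpa using hj
    · simpa [hk] using hTS k

theorem exists_matrix_sum_eq (R : ι → ℕ) (S : κ → ℕ) (h : ∑ i, R i = ∑ j, S j) :
    ∃ A : Matrix ι κ ℕ, (∀ i, ∑ j, A i j = R i) ∧ ∀ j, ∑ i, A i j = S j := by
  classical
  suffices ∀ (s : Finset ι) (S : κ → ℕ), ∑ i ∈ s, R i = ∑ j, S j →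
      ∃ A : ι → κ → ℕ, (∀ i ∈ s, ∑ j, A i j = R i) ∧ ∀ j, ∑ i ∈ s, A i j = S j by
    obtain ⟨A, hrow, hcol⟩ := this univ S h
    exact ⟨A, fun i => hrow i (mem_univ i), hcol⟩
  intro s
  induction s using Finset.induction_on with
  | empty =>
    intro S hS
    have hS0 : ∀ j, S j = 0 := fun j => sum_eq_zero_iff.1 (by simpa using hS.symm) j (mem_univ j)
    exact ⟨0, by simp, by simp [hS0]⟩
  | insert a s ha ih =>
    intro S hS
    rw [sum_insert ha] at hS
    obtain ⟨T, hTS, hT⟩ := exists_le_sum_eq_of_le_sum S (c := R a) (by omega)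
    obtain ⟨A, hrow, hcol⟩ := ih (S - T) (by
      rw [Pi.sub_def, sum_tsub_distrib _ fun j _ => hTS j]; omega)
    have hA : ∀ j, ∑ i ∈ s, update A a T i j = ∑ i ∈ s, A i j := fun j =>
      sum_congr rfl fun i hi => by rw [update_of_ne (ne_of_mem_of_not_mem hi ha)]
    refine ⟨update A a T, fun i hi => ?_, fun j => ?_⟩
    · rcases mem_insert.1 hi with rfl | hi
      · simpa using hT
      · rw [update_of_ne (ne_of_mem_of_not_mem hi ha), hrow i hi]
    · rw [sum_insert ha, hA, hcol, update_self]
      simpa using Nat.add_sub_cancel' (hTS j)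

theorem exists_le_mod_two_eq_sum_eq (R : ι → ℕ) {c : ℕ} (hodd : #{i | R i % 2 = 1} ≤ c)
    (hle : c ≤ ∑ i, R i) (hpar : c % 2 = (∑ i, R i) % 2) :
    ∃ t : ι → ℕ, (∀ i, t i ≤ R i ∧ t i % 2 = R i % 2) ∧ ∑ i, t i = c := by
  have hcard : #{i | R i % 2 = 1} = ∑ i, R i % 2 := by
    rw [card_filter]
    exact sum_congr rfl fun i _ => by split_ifs <;> omega
  have hsplit : ∑ i, R i = ∑ i, R i % 2 + 2 * ∑ i, R i / 2 := by
    rw [mul_sum, ← sum_add_distrib]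
    exact sum_congr rfl fun i _ => (Nat.mod_add_div _ _).symm
  obtain ⟨u, hu, hus⟩ := exists_le_sum_eq_of_le_sum (fun i => R i / 2)
    (c := (c - ∑ i, R i % 2) / 2) (by omega)
  refine ⟨fun i => R i % 2 + 2 * u i, fun i => ?_, ?_⟩
  · have := hu i
    dsimp only at this ⊢
    omega
  · rw [sum_add_distrib, ← mul_sum]
    omega

end Transport

section Involution

variable {κ : Type*} [LinearOrder κ] {σ : κ → κ}

theorem Function.Involutive.ite_add_ite_add_ite {M : Type*} [AddMonoid M] (hσ : Involutive σ)
    {f : κ → M} (hf : ∀ j, f j = f (σ j)) (j : κ) :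
    (if j < σ j then f j else 0) + (if σ j < σ (σ j) then f (σ j) else 0) +
      (if σ j = j then f j else 0) = f j := by
  rw [hσ j, ← hf j]
  rcases lt_trichotomy j (σ j) with h | h | h
  · simp [h, h.not_gt, h.ne']
  · simp [← h]
  · simp [h, h.not_gt, h.ne]

variable [Fintype κ]

theorem Function.Involutive.sum_eq_two_nsmul_add {M : Type*} [AddCommMonoid M]
    (hσ : Involutive σ) {f : κ → M} (hf : ∀ j, f j = f (σ j)) :
    ∑ j, f j = 2 • ∑ j with j < σ j, f j + ∑ j with σ j = j, f j := by
  calc ∑ j, f j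
      = ∑ j, ((if j < σ j then f j else 0) + (if σ j < σ (σ j) then f (σ j) else 0) +
          (if σ j = j then f j else 0)) :=
        sum_congr rfl fun j _ => (hσ.ite_add_ite_add_ite hf j).symm
    _ = 2 • ∑ j with j < σ j, f j + ∑ j with σ j = j, f j := by
        rw [sum_add_distrib, sum_add_distrib,
          hσ.bijective.sum_comp fun j => if j < σ j then f j else 0, ← sum_filter, ← sum_filter,
          two_nsmul]

variable {ι : Type*} [Fintype ι]

theorem card_odd_le_sum_fixed_of_invariant (hσ : Involutive σ) {A : Matrix ι κ ℕ}
    (hA : ∀ i j, A i j = A i (σ j)) :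
    #{i | (∑ j, A i j) % 2 = 1} ≤ ∑ j with σ j = j, ∑ i, A i j := by
  have hpos : ∀ i ∈ univ.filter fun i => (∑ j, A i j) % 2 = 1,
      1 ≤ ∑ j with σ j = j, A i j := fun i hi => by
    have := hσ.sum_eq_two_nsmul_add (hA i)
    rw [smul_eq_mul] at this
    rw [mem_filter] at hi
    omega
  calc #{i | (∑ j, A i j) % 2 = 1}
      ≤ ∑ i with (∑ j, A i j) % 2 = 1, ∑ j with σ j = j, A i j := by
        simpa using card_nsmul_le_sum _ _ 1 hpos
    _ ≤ ∑ i, ∑ j with σ j = j, A i j := sum_le_sum_of_subset (filter_subset _ _)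
    _ = ∑ j with σ j = j, ∑ i, A i j := sum_comm

theorem exists_invariant_matrix_of_card_odd_le (hσ : Involutive σ) (R : ι → ℕ) (S : κ → ℕ)
    (hsum : ∑ i, R i = ∑ j, S j) (hS : ∀ j, S j = S (σ j))
    (hodd : #{i | R i % 2 = 1} ≤ ∑ j with σ j = j, S j) :
    ∃ A : Matrix ι κ ℕ, (∀ i, ∑ j, A i j = R i) ∧ (∀ j, ∑ i, A i j = S j) ∧
      ∀ i j, A i j = A i (σ j) := by
  have hdec := hσ.sum_eq_two_nsmul_add hS
  rw [smul_eq_mul] at hdec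
  obtain ⟨t, ht, htsum⟩ := exists_le_mod_two_eq_sum_eq R hodd (by omega) (by omega)
  have hhalf : 2 * ∑ i, (R i - t i) / 2 + ∑ i, t i = ∑ i, R i := by
    rw [mul_sum, ← sum_add_distrib]
    exact sum_congr rfl fun i _ => by have := ht i; omega
  -- `C` fills the fixed columns with the parity-correcting `t`, `B` one column of each pair.
  obtain ⟨C, hCrow, hCcol⟩ := exists_matrix_sum_eq t (fun j => if σ j = j then S j else 0)
    (by rw [htsum, sum_filter])
  obtain ⟨B, hBrow, hBcol⟩ := exists_matrix_sum_eq (fun i => (R i - t i) / 2)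
    (fun j => if j < σ j then S j else 0) (by rw [← sum_filter]; omega)
  have hC : ∀ j, σ j ≠ j → ∀ i, C i j = 0 := fun j hj => by
    simpa [hj] using hCcol j
  refine ⟨fun i j => B i j + B i (σ j) + C i j, fun i => ?_, fun j => ?_, fun i j => ?_⟩
  · simp only [sum_add_distrib, hσ.bijective.sum_comp (B i), hBrow, hCrow]
    have := ht i
    omega
  · simp only [sum_add_distrib, hBcol, hCcol]
    exact hσ.ite_add_ite_add_ite hS j
  · show B i j + B i (σ j) + C i j = B i (σ j) + B i (σ (σ j)) + C i (σ j)
    rw [hσ j, add_comm (B i j)]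
    by_cases hj : σ j = j
    · rw [hj]
    · rw [hC j hj, hC (σ j) (by rwa [hσ j, ne_comm])]

theorem exists_invariant_matrix_iff (hσ : Involutive σ) (R : ι → ℕ) (S : κ → ℕ)
    (hsum : ∑ i, R i = ∑ j, S j) :
    (∃ A : Matrix ι κ ℕ, (∀ i, ∑ j, A i j = R i) ∧ (∀ j, ∑ i, A i j = S j) ∧
      ∀ i j, A i j = A i (σ j)) ↔
      (∀ j, S j = S (σ j)) ∧ #{i | R i % 2 = 1} ≤ ∑ j with σ j = j, S j := by
  refine ⟨?_, fun ⟨hS, hodd⟩ => exists_invariant_matrix_of_card_odd_le hσ R S hsum hS hodd⟩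
  rintro ⟨A, hrow, hcol, hA⟩
  refine ⟨fun j => by simp only [← hcol, ← hA], ?_⟩
  simpa only [hrow, hcol] using card_odd_le_sum_fixed_of_invariant hσ hA

end Involution

theorem Fin.rev_eq_self_iff {n : ℕ} {j : Fin n} : j.rev = j ↔ 2 * j + 1 = n := by
  rw [Fin.ext_iff, Fin.val_rev]
  omega

theorem Fin.sum_filter_rev_eq_self {M : Type*} [AddCommMonoid M] {n : ℕ} (f : Fin n → M) :
    ∑ j with j.rev = j, f j = if h : n % 2 = 1 then f ⟨n / 2, by omega⟩ else 0 := by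
  split_ifs with h
  · refine sum_eq_single_of_mem _ ?_ fun j hj hne => (hne (Fin.ext ?_)).elim
    · simp only [mem_filter, mem_univ, true_and, rev_eq_self_iff]
      omega
    · simp only [mem_filter, rev_eq_self_iff] at hj
      dsimp only
      omega
  · exact sum_eq_zero fun j hj => by simp only [mem_filter, rev_eq_self_iff] at hj; omega

theorem vertical_mirror_transportation_int (m n : ℕ) (R : Fin m → ℕ) (S : Fin n → ℕ)
    (hsum : ∑ i, R i = ∑ j, S j) :
    (∃ A : Matrix (Fin m) (Fin n) ℕ,
        (∀ i, ∑ j, A i j = R i) ∧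
        (∀ j, ∑ i, A i j = S j) ∧
        (∀ i j, A i j = A i j.rev)) ↔
      ((∀ j, S j = S j.rev) ∧
        (n % 2 = 0 → ∀ i, R i % 2 = 0) ∧
        (∀ hn : n % 2 = 1,
          (Finset.univ.filter fun i => R i % 2 = 1).card ≤ S ⟨n / 2, by omega⟩)) := by
  rw [exists_invariant_matrix_iff Fin.rev_involutive R S hsum, Fin.sum_filter_rev_eq_self]
  refine and_congr_right fun _ => ?_
  rcases Nat.mod_two_eq_zero_or_one n with h | h
  · simp [h, filter_eq_empty_iff]
  · simp [h]
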